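/- Let f: S → ℝ be layer-wise (L⁰, L¹)-smooth and let 0 ≤ ζ < 1. Let X ∈ S and let g = [g_1,…,g_p] ∈ S satisfy ‖g_i − ∇_i f(X)‖_{(i)⋆} ≤ ζ ‖g_i‖_{(i)⋆} for all i. Suppose X⁺ = [X⁺_1,…,X⁺_p] is such that, for each i, X⁺_i minimizes X_i ↦ ⟨g_i, X_i⟩_{(i)} over the ball of radius t_i = (1−ζ)‖g_i‖_{(i)⋆} / (L⁰_i + (1+ζ) L¹_i ‖g_i‖_{(i)⋆}) centered at X_i. Then f(X⁺) ≤ f(X) − Σ_{i=1}^p (1−ζ)² ‖g_i‖_{(i)⋆}² / (2 (L⁰_i + (1+ζ) L¹_i ‖g_i‖_{(i)⋆})). -/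

import Mathlib

noncomputable section
open Finset

/-- Trace inner product `⟨A,B⟩ = tr(AᵀB)` on `m×n` real matrices (viewed as functions). -/
def tip {m n : ℕ} (A B : Fin m → Fin n → ℝ) : ℝ := ∑ a, ∑ b, A a b * B a b

/-- An arbitrary norm on the space of `m×n` real matrices. -/
structure MatNorm (m n : ℕ) where
  N : (Fin m → Fin n → ℝ) → ℝ
  pos : ∀ A, A ≠ 0 → 0 < N A
  zero : N 0 = 0
  smul : ∀ (c : ℝ) (A : Fin m → Fin n → ℝ), N (c • A) = |c| * N A
  triangle : ∀ A B, N (A + B) ≤ N A + N B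

/-- The dual norm `‖A‖⋆ = sup_{‖Z‖ ≤ 1} ⟨A, Z⟩`. -/
def MatNorm.dual {m n : ℕ} (nn : MatNorm m n) (A : Fin m → Fin n → ℝ) : ℝ :=
  sSup {r : ℝ | ∃ Z, nn.N Z ≤ 1 ∧ r = tip A Z}

/-- `Y` minimizes the linear functional `Z ↦ ⟨G, Z⟩` over the ball of radius `t`
centered at `C` (the linear minimization oracle). -/
def IsLMOMin {m n : ℕ} (nn : MatNorm m n) (G C : Fin m → Fin n → ℝ) (t : ℝ)
    (Y : Fin m → Fin n → ℝ) : Prop :=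
  nn.N (Y - C) ≤ t ∧ ∀ Z, nn.N (Z - C) ≤ t → tip G Y ≤ tip G Z

/-! Along the segment from `X` to `X⁺ = X + D`, layer-wise smoothness bounds the directional
derivative of `f` by an affine function of time, which yields the quadratic upper model
`f(X⁺) ≤ f(X) + Σᵢ ⟨∇ᵢf(X), Dᵢ⟩ + (L⁰ᵢ + L¹ᵢ‖∇ᵢf(X)‖⋆)/2 ‖Dᵢ‖²`. In each block,
`‖∇ᵢf(X)‖⋆ ≤ (1+ζ)‖gᵢ‖⋆` and `⟨∇ᵢf(X) − gᵢ, Dᵢ⟩ ≤ ζ‖gᵢ‖⋆tᵢ`, while the oracle gives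
`⟨gᵢ, Dᵢ⟩ ≤ −tᵢ‖gᵢ‖⋆`. So the `i`-th term is at most
`−(1−ζ)‖gᵢ‖⋆tᵢ + (L⁰ᵢ + (1+ζ)L¹ᵢ‖gᵢ‖⋆)tᵢ²/2`, and `tᵢ` is the minimizer of this quadratic.
The dual norm is attained on the unit ball, which is compact because all norms on a
finite-dimensional space are equivalent. -/

section TraceInner

variable {m n : ℕ}

lemma tip_zero_right (A : Fin m → Fin n → ℝ) : tip A 0 = 0 := by
  simp [tip]

lemma tip_sub_left (A B Z : Fin m → Fin n → ℝ) : tip (A - B) Z = tip A Z - tip B Z := by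
  simp [tip, sub_mul]

lemma tip_sub_right (A Y Z : Fin m → Fin n → ℝ) : tip A (Y - Z) = tip A Y - tip A Z := by
  simp [tip, mul_sub]

lemma tip_smul_right (c : ℝ) (A Z : Fin m → Fin n → ℝ) : tip A (c • Z) = c * tip A Z := by
  simp only [tip, Pi.smul_apply, smul_eq_mul, Finset.mul_sum]
  exact Finset.sum_congr rfl fun _ _ => Finset.sum_congr rfl fun _ _ => by ring

lemma tip_neg_right (A Z : Fin m → Fin n → ℝ) : tip A (-Z) = -tip A Z := by
  simp [tip]

lemma continuous_tip (A : Fin m → Fin n → ℝ) : Continuous (tip A) := by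
  unfold tip; fun_prop

end TraceInner

namespace MatNorm

variable {m n : ℕ} (nn : MatNorm m n)

lemma N_nonneg (A : Fin m → Fin n → ℝ) : 0 ≤ nn.N A := by
  rcases eq_or_ne A 0 with rfl | hA
  · exact nn.zero.ge
  · exact (nn.pos A hA).le

lemma N_neg (A : Fin m → Fin n → ℝ) : nn.N (-A) = nn.N A := by
  simpa using nn.smul (-1) A

lemma convexOn_N : ConvexOn ℝ Set.univ nn.N := by
  refine ⟨convex_univ, fun A _ B _ a b ha hb _ => ?_⟩
  calc nn.N (a • A + b • B) ≤ nn.N (a • A) + nn.N (b • B) := nn.triangle _ _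
    _ = a • nn.N A + b • nn.N B := by
      rw [nn.smul, nn.smul, abs_of_nonneg ha, abs_of_nonneg hb, smul_eq_mul, smul_eq_mul]

lemma continuous_N : Continuous nn.N := by
  rw [← continuousOn_univ]
  simpa using nn.convexOn_N.continuousOn_interior

lemma exists_pos_mul_norm_le : ∃ c, 0 < c ∧ ∀ Z, c * ‖Z‖ ≤ nn.N Z := by
  obtain ⟨c, hc, hsphere⟩ := (isCompact_sphere (0 : Fin m → Fin n → ℝ) 1).exists_forall_le'
    nn.continuous_N.continuousOn fun Z hZ => nn.pos Z (ne_zero_of_mem_unit_sphere ⟨Z, hZ⟩)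
  refine ⟨c, hc, fun Z => ?_⟩
  rcases eq_or_ne Z 0 with rfl | hZ
  · simp [nn.zero]
  have hnorm : 0 < ‖Z‖ := norm_pos_iff.mpr hZ
  have h := hsphere (‖Z‖⁻¹ • Z) (by simp [norm_smul, hnorm.ne'])
  rw [nn.smul, abs_of_pos (inv_pos.mpr hnorm), le_inv_mul_iff₀ hnorm] at h
  linarith

lemma isCompact_unitBall : IsCompact {Z | nn.N Z ≤ 1} := by
  obtain ⟨c, hc, hlow⟩ := nn.exists_pos_mul_norm_le
  refine Metric.isCompact_of_isClosed_isBounded (isClosed_le nn.continuous_N continuous_const) ?_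
  refine (Metric.isBounded_closedBall (x := 0) (r := 1 / c)).subset fun Z hZ => ?_
  rw [mem_closedBall_zero_iff, le_div_iff₀ hc, mul_comm]
  exact (hlow Z).trans hZ

lemma exists_tip_eq_dual (A : Fin m → Fin n → ℝ) :
    ∃ Z, nn.N Z ≤ 1 ∧ tip A Z = nn.dual A ∧ ∀ W, nn.N W ≤ 1 → tip A W ≤ tip A Z := by
  obtain ⟨Z, hZ, hmax⟩ := nn.isCompact_unitBall.exists_isMaxOn
    ⟨0, (nn.zero.trans_le zero_le_one : nn.N 0 ≤ 1)⟩ (continuous_tip A).continuousOn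
  have hgreatest : IsGreatest {r : ℝ | ∃ Z, nn.N Z ≤ 1 ∧ r = tip A Z} (tip A Z) :=
    ⟨⟨Z, hZ, rfl⟩, by rintro _ ⟨W, hW, rfl⟩; exact hmax hW⟩
  exact ⟨Z, hZ, hgreatest.csSup_eq.symm, fun W hW => hmax hW⟩

lemma tip_le_dual_mul (A Z : Fin m → Fin n → ℝ) : tip A Z ≤ nn.dual A * nn.N Z := by
  obtain ⟨Z₀, -, hdual, hmax⟩ := nn.exists_tip_eq_dual A
  rcases eq_or_ne Z 0 with rfl | hZ
  · simp [tip_zero_right, nn.zero]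
  have hN : 0 < nn.N Z := nn.pos Z hZ
  have h := hmax ((nn.N Z)⁻¹ • Z) (by rw [nn.smul, abs_of_pos (inv_pos.mpr hN), inv_mul_cancel₀ hN.ne'])
  rw [tip_smul_right, hdual, inv_mul_le_iff₀ hN] at h
  linarith

lemma dual_nonneg (A : Fin m → Fin n → ℝ) : 0 ≤ nn.dual A := by
  obtain ⟨Z, -, hdual, hmax⟩ := nn.exists_tip_eq_dual A
  simpa [hdual, tip_zero_right] using hmax 0 (nn.zero.trans_le zero_le_one)

lemma dual_le_add_dual_sub (A B : Fin m → Fin n → ℝ) :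
    nn.dual A ≤ nn.dual B + nn.dual (B - A) := by
  obtain ⟨Z, hZ, hdual, -⟩ := nn.exists_tip_eq_dual A
  have hB := nn.tip_le_dual_mul B Z
  have hBA := nn.tip_le_dual_mul (B - A) (-Z)
  rw [tip_neg_right, tip_sub_left, nn.N_neg] at hBA
  nlinarith [nn.dual_nonneg B, nn.dual_nonneg (B - A), nn.N_nonneg Z]

end MatNorm

lemma IsLMOMin.tip_sub_le {m n : ℕ} {nn : MatNorm m n} {G C Y : Fin m → Fin n → ℝ} {t : ℝ}
    (h : IsLMOMin nn G C t Y) : tip G (Y - C) ≤ -(t * nn.dual G) := by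
  obtain ⟨Z, hZ, hdual, -⟩ := nn.exists_tip_eq_dual G
  have ht : 0 ≤ t := (nn.N_nonneg _).trans h.1
  have hball : nn.N ((C - t • Z) - C) ≤ t := by
    rw [sub_sub_cancel_left, nn.N_neg, nn.smul, abs_of_nonneg ht]
    exact mul_le_of_le_one_right ht hZ
  have hmin := h.2 _ hball
  rw [tip_sub_right, tip_smul_right, hdual] at hmin
  rw [tip_sub_right]
  linarith

lemma le_add_of_hasDerivAt_le_affine {φ φ' : ℝ → ℝ} {a b : ℝ}
    (hφ : ∀ s, HasDerivAt φ (φ' s) s) (hle : ∀ s ∈ Set.Ioo (0 : ℝ) 1, φ' s ≤ a + b * s) :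
    φ 1 ≤ φ 0 + a + b / 2 := by
  let ψ : ℝ → ℝ := fun s => φ s - (a * s + b / 2 * s ^ 2)
  have hψ : ∀ s, HasDerivAt ψ (φ' s - (a + b * s)) s := fun s => by
    refine ((hφ s).sub (((hasDerivAt_id' s).const_mul a).add
      ((hasDerivAt_pow 2 s).const_mul (b / 2)))).congr_deriv ?_
    push_cast
    ring
  have hanti : AntitoneOn ψ (Set.Icc 0 1) :=
    antitoneOn_of_hasDerivWithinAt_nonpos (convex_Icc 0 1)
      (fun s _ => (hψ s).continuousAt.continuousWithinAt)
      (fun s _ => (hψ s).hasDerivWithinAt)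
      (fun s hs => by rw [interior_Icc] at hs; linarith [hle s hs])
  have h := hanti (Set.left_mem_Icc.mpr zero_le_one) (Set.right_mem_Icc.mpr zero_le_one)
    zero_le_one
  simp only [ψ] at h
  linarith

lemma layerwise_descent {p : ℕ} {m n : Fin p → ℕ} (nn : ∀ i, MatNorm (m i) (n i))
    (f : (∀ i, Fin (m i) → Fin (n i) → ℝ) → ℝ)
    (g : (∀ i, Fin (m i) → Fin (n i) → ℝ) → ∀ i, Fin (m i) → Fin (n i) → ℝ)
    (hf : Differentiable ℝ f) (hgrad : ∀ X H, fderiv ℝ f X H = ∑ i, tip (g X i) (H i))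
    (L0 L1 : Fin p → ℝ)
    (hsmooth : ∀ i X Y, (nn i).dual (g X i - g Y i)
      ≤ (L0 i + L1 i * (nn i).dual (g X i)) * (nn i).N (X i - Y i))
    (X D : ∀ i, Fin (m i) → Fin (n i) → ℝ) :
    f (X + D) ≤ f X + ∑ i, (tip (g X i) (D i)
      + (L0 i + L1 i * (nn i).dual (g X i)) / 2 * (nn i).N (D i) ^ 2) := by
  set L : Fin p → ℝ := fun i => L0 i + L1 i * (nn i).dual (g X i)
  have hsegment : ∀ s : ℝ, HasDerivAt (fun s : ℝ => f (X + s • D))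
      (∑ i, tip (g (X + s • D) i) (D i)) s := fun s => by
    rw [← hgrad]
    refine (hf _).hasFDerivAt.comp_hasDerivAt s ?_
    simpa using ((hasDerivAt_id s).smul_const D).const_add X
  have hblock : ∀ s, 0 ≤ s → ∀ i,
      tip (g (X + s • D) i) (D i) ≤ tip (g X i) (D i) + L i * (nn i).N (D i) ^ 2 * s := by
    intro s hs i
    have hdist : (nn i).N (X i - (X + s • D) i) = s * (nn i).N (D i) := by
      rw [Pi.add_apply, sub_add_cancel_left, Pi.smul_apply, (nn i).N_neg, (nn i).smul,
        abs_of_nonneg hs]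
    -- the smoothness bound is anchored at `X`, so it is applied to `g X − g (X + sD)` against `−D`
    have hpair := (nn i).tip_le_dual_mul (g X i - g (X + s • D) i) (-D i)
    rw [tip_neg_right, tip_sub_left, (nn i).N_neg] at hpair
    have hlip := mul_le_mul_of_nonneg_right (hsmooth i X (X + s • D)) ((nn i).N_nonneg (D i))
    rw [hdist] at hlip
    nlinarith
  have h := le_add_of_hasDerivAt_le_affine hsegment (fun s hs => by
    calc ∑ i, tip (g (X + s • D) i) (D i)
        ≤ ∑ i, (tip (g X i) (D i) + L i * (nn i).N (D i) ^ 2 * s) :=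
          Finset.sum_le_sum fun i _ => hblock s hs.1.le i
      _ = ∑ i, tip (g X i) (D i) + (∑ i, L i * (nn i).N (D i) ^ 2) * s := by
          rw [Finset.sum_add_distrib, Finset.sum_mul])
  simp only [one_smul, zero_smul, add_zero] at h
  calc f (X + D) ≤ f X + ∑ i, tip (g X i) (D i) + (∑ i, L i * (nn i).N (D i) ^ 2) / 2 := h
    _ = _ := by
      rw [Finset.sum_add_distrib, Finset.sum_div]
      simp only [L, div_mul_eq_mul_div]
      ring

lemma block_descent_le {m n : ℕ} (nn : MatNorm m n) {gX gt D : Fin m → Fin n → ℝ}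
    {L0 L1 ζ t : ℝ} (hL0 : 0 ≤ L0) (hL1 : 0 ≤ L1) (hζ : 0 ≤ ζ)
    (herr : nn.dual (gt - gX) ≤ ζ * nn.dual gt) (hD : nn.N D ≤ t)
    (hlin : tip gt D ≤ -(t * nn.dual gt)) :
    tip gX D + (L0 + L1 * nn.dual gX) / 2 * nn.N D ^ 2
      ≤ -((1 - ζ) * nn.dual gt * t) + (L0 + (1 + ζ) * L1 * nn.dual gt) / 2 * t ^ 2 := by
  have hND := nn.N_nonneg D
  have herrD : tip gX D ≤ tip gt D + ζ * nn.dual gt * t := by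
    have h := nn.tip_le_dual_mul (gt - gX) (-D)
    rw [tip_neg_right, tip_sub_left, nn.N_neg] at h
    have hζG : 0 ≤ ζ * nn.dual gt := mul_nonneg hζ (nn.dual_nonneg gt)
    linarith [mul_le_mul herr hD hND hζG]
  have hdual : nn.dual gX ≤ (1 + ζ) * nn.dual gt := by
    linarith [nn.dual_le_add_dual_sub gX gt]
  have hcurv : (L0 + L1 * nn.dual gX) * nn.N D ^ 2
      ≤ (L0 + (1 + ζ) * L1 * nn.dual gt) * t ^ 2 := by
    have hL : 0 ≤ L0 + L1 * nn.dual gX := add_nonneg hL0 (mul_nonneg hL1 (nn.dual_nonneg gX))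
    calc (L0 + L1 * nn.dual gX) * nn.N D ^ 2 ≤ (L0 + L1 * nn.dual gX) * t ^ 2 := by gcongr
      _ ≤ (L0 + (1 + ζ) * L1 * nn.dual gt) * t ^ 2 := by
        refine mul_le_mul_of_nonneg_right ?_ (sq_nonneg t)
        linarith [mul_le_mul_of_nonneg_left hdual hL1]
  linarith

lemma quadratic_model_at_optimal_radius (G H ζ : ℝ) :
    -((1 - ζ) * G * ((1 - ζ) * G / H)) + H / 2 * ((1 - ζ) * G / H) ^ 2
      = -((1 - ζ) ^ 2 * G ^ 2 / (2 * H)) := by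
  rcases eq_or_ne H 0 with rfl | hH
  · simp
  · field_simp
    ring

theorem stmt_12_general {p : ℕ} {m n : Fin p → ℕ}
    (nn : ∀ i, MatNorm (m i) (n i))
    (f : (∀ i, Fin (m i) → Fin (n i) → ℝ) → ℝ)
    (g : (∀ i, Fin (m i) → Fin (n i) → ℝ) → ∀ i, Fin (m i) → Fin (n i) → ℝ)
    (hdiff : ContDiff ℝ 1 f)
    (hgrad : ∀ X H, fderiv ℝ f X H = ∑ i, tip (g X i) (H i))
    (L0 L1 : Fin p → ℝ) (hL0 : ∀ i, 0 ≤ L0 i) (hL1 : ∀ i, 0 ≤ L1 i)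
    (hsmooth : ∀ i X Y, (nn i).dual (g X i - g Y i)
      ≤ (L0 i + L1 i * (nn i).dual (g X i)) * (nn i).N (X i - Y i))
    (ζ : ℝ) (hζ0 : 0 ≤ ζ)
    (X Xp : ∀ i, Fin (m i) → Fin (n i) → ℝ)
    (gt : ∀ i, Fin (m i) → Fin (n i) → ℝ)
    (hgt : ∀ i, (nn i).dual (gt i - g X i) ≤ ζ * (nn i).dual (gt i))
    (hupd : ∀ i, IsLMOMin (nn i) (gt i) (X i)
      ((1 - ζ) * (nn i).dual (gt i) / (L0 i + (1 + ζ) * L1 i * (nn i).dual (gt i)))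
      (Xp i)) :
    f Xp ≤ f X - ∑ i, (1 - ζ) ^ 2 * ((nn i).dual (gt i)) ^ 2
      / (2 * (L0 i + (1 + ζ) * L1 i * (nn i).dual (gt i))) := by
  have hmodel := layerwise_descent nn f g (hdiff.differentiable one_ne_zero) hgrad L0 L1
    hsmooth X (Xp - X)
  rw [add_sub_cancel] at hmodel
  refine hmodel.trans ?_
  rw [sub_eq_add_neg (f X), ← Finset.sum_neg_distrib]
  gcongr with i
  rw [← quadratic_model_at_optimal_radius]
  exact block_descent_le (nn i) (hL0 i) (hL1 i) hζ0 (hgt i) (hupd i).1 (hupd i).tip_sub_le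

/-- One-step descent with an inexact gradient `g̃` with relative error `ζ ∈ [0,1)`:
if each `X⁺ᵢ` minimizes `⟨g̃ᵢ, ·⟩` over the ball of radius
`tᵢ = (1−ζ)‖g̃ᵢ‖⋆/(L⁰ᵢ + (1+ζ)L¹ᵢ‖g̃ᵢ‖⋆)` centered at `Xᵢ`, then
`f(X⁺) ≤ f(X) − Σᵢ (1−ζ)²‖g̃ᵢ‖⋆²/(2(L⁰ᵢ + (1+ζ)L¹ᵢ‖g̃ᵢ‖⋆))`. -/
theorem stmt_12 {p : ℕ} {m n : Fin p → ℕ}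
    (nn : ∀ i, MatNorm (m i) (n i))
    (f : (∀ i, Fin (m i) → Fin (n i) → ℝ) → ℝ)
    (g : (∀ i, Fin (m i) → Fin (n i) → ℝ) → ∀ i, Fin (m i) → Fin (n i) → ℝ)
    (hdiff : ContDiff ℝ 1 f)
    (hgrad : ∀ X H, fderiv ℝ f X H = ∑ i, tip (g X i) (H i))
    (L0 L1 : Fin p → ℝ) (hL0 : ∀ i, 0 ≤ L0 i) (hL1 : ∀ i, 0 ≤ L1 i)
    (hsmooth : ∀ i X Y, (nn i).dual (g X i - g Y i)
      ≤ (L0 i + L1 i * (nn i).dual (g X i)) * (nn i).N (X i - Y i))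
    (ζ : ℝ) (hζ0 : 0 ≤ ζ) (hζ1 : ζ < 1)
    (X Xp : ∀ i, Fin (m i) → Fin (n i) → ℝ)
    (gt : ∀ i, Fin (m i) → Fin (n i) → ℝ)
    (hgt : ∀ i, (nn i).dual (gt i - g X i) ≤ ζ * (nn i).dual (gt i))
    (hupd : ∀ i, IsLMOMin (nn i) (gt i) (X i)
      ((1 - ζ) * (nn i).dual (gt i) / (L0 i + (1 + ζ) * L1 i * (nn i).dual (gt i)))
      (Xp i)) :
    f Xp ≤ f X - ∑ i, (1 - ζ) ^ 2 * ((nn i).dual (gt i)) ^ 2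
      / (2 * (L0 i + (1 + ζ) * L1 i * (nn i).dual (gt i))) :=
  stmt_12_general nn f g hdiff hgrad L0 L1 hL0 hL1 hsmooth ζ hζ0 X Xp gt hgt hupd
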